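/- arXiv:2409.19636 — 4 statements merged into one kernel-verified Lean document; each statement's English description precedes it below -/
import Mathlib

section
/- The Gerstewitz function ψ_e is Lipschitz continuous on ℝ^m: there exists L > 0 such that |ψ_e(y) - ψ_e(z)| ≤ L‖y - z‖ for all y, z ∈ ℝ^m. -/
open Set

noncomputable def psi {m : ℕ} (K : Set (EuclideanSpace ℝ (Fin m)))
    (e z : EuclideanSpace ℝ (Fin m)) : ℝ :=
  sInf {t : ℝ | t • e - z ∈ K}

theorem gerstewitz_lipschitz {m : ℕ} (K : Set (EuclideanSpace ℝ (Fin m)))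
    (e : EuclideanSpace ℝ (Fin m))
    (hcl : IsClosed K) (hconv : Convex ℝ K)
    (hadd : ∀ x ∈ K, ∀ y ∈ K, x + y ∈ K)
    (hsmul : ∀ (c : ℝ), 0 ≤ c → ∀ x ∈ K, c • x ∈ K)
    (hpointed : K ∩ (-K) = {0})
    (he : e ∈ interior K) :
    ∃ L : ℝ, 0 < L ∧ ∀ y z : EuclideanSpace ℝ (Fin m),
      |psi K e y - psi K e z| ≤ L * ‖y - z‖ := by
  have h0K : (0 : EuclideanSpace ℝ (Fin m)) ∈ K := by
    have h : (0 : EuclideanSpace ℝ (Fin m)) ∈ K ∩ (-K) := by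
      rw [hpointed]; exact rfl
    exact h.1
  rcases Nat.eq_zero_or_pos m with hm | hm
  · -- trivial space: psi is identically 0
    subst hm
    refine ⟨1, one_pos, fun y z => ?_⟩
    have hz : ∀ w : EuclideanSpace ℝ (Fin 0), psi K e w = 0 := by
      intro w
      have huniv : {t : ℝ | t • e - w ∈ K} = univ := by
        ext t
        simp only [mem_setOf_eq, mem_univ, iff_true]
        have : t • e - w = 0 := Subsingleton.elim _ _
        rw [this]; exact h0K
      rw [psi, huniv]
      rw [csInf_of_not_bddBelow]
      · exact Real.sInf_empty
      · intro ⟨b, hb⟩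
        have := hb (mem_univ (b - 1))
        linarith
    rw [hz y, hz z]
    simp [norm_nonneg]
  -- main case
  obtain ⟨ε, hε, hball⟩ := Metric.mem_nhds_iff.mp (mem_interior_iff_mem_nhds.mp he)
  have heK : e ∈ K := interior_subset he
  -- e ≠ 0
  have hene : e ≠ 0 := by
    intro h0
    subst h0
    set x : EuclideanSpace ℝ (Fin m) := (ε / 2) • EuclideanSpace.single ⟨0, hm⟩ (1 : ℝ) with hx
    have hnx : ‖x‖ = ε / 2 := by
      rw [hx, norm_smul, EuclideanSpace.norm_single]
      rw [Real.norm_eq_abs, abs_of_pos (by linarith : (0:ℝ) < ε / 2), norm_one, mul_one]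
    have hxK : x ∈ K := hball (by simp [Metric.mem_ball, dist_eq_norm, hnx]; linarith)
    have hmxK : -x ∈ K := hball (by simp [Metric.mem_ball, dist_eq_norm, hnx]; linarith)
    have : x ∈ K ∩ (-K) := ⟨hxK, by simpa [mem_neg] using hmxK⟩
    rw [hpointed] at this
    have : x = 0 := this
    rw [this] at hnx
    simp at hnx
    linarith
  have hneK : -e ∉ K := by
    intro h
    have : e ∈ K ∩ (-K) := ⟨heK, by simpa [mem_neg] using h⟩
    rw [hpointed] at this
    exact hene this
  -- separation
  obtain ⟨f, u, hfu, hue⟩ := geometric_hahn_banach_closed_point hconv hcl hneK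
  have hu0 : 0 < u := by have := hfu 0 h0K; simpa using this
  have hfK : ∀ a ∈ K, f a ≤ 0 := by
    intro a ha
    by_contra h
    push_neg at h
    set c : ℝ := (|u| + 1) / f a with hc
    have hc0 : 0 < c := div_pos (by positivity) h
    have hca : c • a ∈ K := hsmul c hc0.le a ha
    have : f (c • a) < u := hfu _ hca
    rw [map_smul, smul_eq_mul, hc, div_mul_cancel₀ _ (ne_of_gt h)] at this
    have := abs_nonneg u
    linarith [le_abs_self u]
  have hfe : f e < 0 := by
    have : u < f (-e) := hue
    rw [map_neg] at this
    linarith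
  -- nonempty
  have hne : ∀ z : EuclideanSpace ℝ (Fin m),
      {t : ℝ | t • e - z ∈ K}.Nonempty := by
    intro z
    refine ⟨‖z‖ / ε + 1, ?_⟩
    set t : ℝ := ‖z‖ / ε + 1 with ht
    have ht0 : 0 < t := by positivity
    have htε : ‖z‖ < t * ε := by
      rw [ht, add_mul, div_mul_cancel₀ _ (ne_of_gt hε)]
      linarith
    have hmem : e - t⁻¹ • z ∈ Metric.ball e ε := by
      rw [Metric.mem_ball, dist_eq_norm]
      have : e - (e - t⁻¹ • z) = t⁻¹ • z := by abel
      rw [show e - t⁻¹ • z - e = -(t⁻¹ • z) by abel, norm_neg, norm_smul,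
        Real.norm_eq_abs, abs_inv, abs_of_pos ht0]
      rw [inv_mul_lt_iff₀ ht0]
      linarith
    have : t • (e - t⁻¹ • z) ∈ K := hsmul t ht0.le _ (hball hmem)
    rwa [smul_sub, smul_inv_smul₀ (ne_of_gt ht0)] at this
  -- bddBelow
  have hbdd : ∀ z : EuclideanSpace ℝ (Fin m),
      BddBelow {t : ℝ | t • e - z ∈ K} := by
    intro z
    refine ⟨f z / f e, fun t ht => ?_⟩
    have h1 : f (t • e - z) ≤ 0 := hfK _ ht
    rw [map_sub, map_smul, smul_eq_mul] at h1
    rw [div_le_iff_of_neg hfe]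
    nlinarith
  -- key one-sided estimate
  have key : ∀ y z : EuclideanSpace ℝ (Fin m),
      psi K e y ≤ psi K e z + 2 / ε * ‖y - z‖ := by
    intro y z
    set c : ℝ := 2 / ε * ‖y - z‖ with hc
    have hc0 : 0 ≤ c := by positivity
    have hcK : c • e - (y - z) ∈ K := by
      by_cases hyz : y = z
      · have hc' : c = 0 := by simp [hc, hyz]
        simp [hc', hyz, h0K]
      · have hnyz : 0 < ‖y - z‖ := by
          rw [norm_pos_iff]; exact sub_ne_zero_of_ne hyz
        have hc0' : 0 < c := by positivity
        have hmem : e - c⁻¹ • (y - z) ∈ Metric.ball e ε := by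
          rw [Metric.mem_ball, dist_eq_norm,
            show e - c⁻¹ • (y - z) - e = -(c⁻¹ • (y - z)) by abel, norm_neg,
            norm_smul, Real.norm_eq_abs, abs_inv, abs_of_pos hc0']
          have : c⁻¹ * ‖y - z‖ = ε / 2 := by
            rw [hc]
            field_simp
          rw [this]
          linarith
        have := hsmul c hc0 _ (hball hmem)
        rwa [smul_sub, smul_inv_smul₀ (ne_of_gt hc0')] at this
    have hstep : ∀ t ∈ {t : ℝ | t • e - z ∈ K}, t + c ∈ {t : ℝ | t • e - y ∈ K} := by
      intro t ht
      have : (t + c) • e - y = (t • e - z) + (c • e - (y - z)) := by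
        rw [add_smul]; abel
      simp only [mem_setOf_eq, this]
      exact hadd _ ht _ hcK
    have h1 : psi K e y - c ≤ psi K e z := by
      apply le_csInf (hne z)
      intro t ht
      have := csInf_le (hbdd y) (hstep t ht)
      have h2 : psi K e y ≤ t + c := this
      linarith
    linarith
  refine ⟨2 / ε, by positivity, fun y z => ?_⟩
  rw [abs_sub_le_iff]
  constructor
  · linarith [key y z]
  · have := key z y
    rw [norm_sub_rev] at this
    linarith
end

section
/- Every nonempty compact set A ⊆ ℝ^m satisfies the domination property with respect to K: A + K = Min(A, K) + K, where Min(A, K) = {z ∈ A : (z - K) ∩ A = {z}}. -/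
open Set Pointwise

/-- The set of minimal elements of `A` with respect to the cone `K`. -/
def minSet {m : ℕ} (K A : Set (EuclideanSpace ℝ (Fin m))) : Set (EuclideanSpace ℝ (Fin m)) :=
  {z | z ∈ A ∧ (({z} - K) ∩ A = {z})}

lemma mem_singleton_sub {m : ℕ} (K : Set (EuclideanSpace ℝ (Fin m)))
    (x y : EuclideanSpace ℝ (Fin m)) : y ∈ ({x} : Set _) - K ↔ x - y ∈ K := by
  simp only [Set.mem_sub, Set.mem_singleton_iff]
  constructor
  · rintro ⟨a, rfl, k, hk, rfl⟩
    simpa using hk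
  · intro h
    exact ⟨x, rfl, x - y, h, by abel⟩

theorem domination_property {m : ℕ} (K : Set (EuclideanSpace ℝ (Fin m)))
    (hcl : IsClosed K) (hconv : Convex ℝ K)
    (hadd : ∀ x ∈ K, ∀ y ∈ K, x + y ∈ K)
    (hsmul : ∀ (c : ℝ), 0 ≤ c → ∀ x ∈ K, c • x ∈ K)
    (hpointed : K ∩ (-K) = {0})
    (hsolid : (interior K).Nonempty)
    (A : Set (EuclideanSpace ℝ (Fin m))) (hA : A.Nonempty) (hAc : IsCompact A) :
    A + K = minSet K A + K := by
  have h0K : (0 : EuclideanSpace ℝ (Fin m)) ∈ K := by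
    have : (0 : EuclideanSpace ℝ (Fin m)) ∈ K ∩ (-K) := by rw [hpointed]; rfl
    exact this.1
  -- the "lower section" sets
  set C : EuclideanSpace ℝ (Fin m) → Set (EuclideanSpace ℝ (Fin m)) :=
    fun x => {y | x - y ∈ K} ∩ A with hC
  have hCrepr : ∀ x, (({x} : Set _) - K) ∩ A = C x := by
    intro x
    ext y
    simp only [Set.mem_inter_iff, mem_singleton_sub, hC, Set.mem_setOf_eq]
  have hCclosed : ∀ x, IsClosed (C x) :=
    fun x => (hcl.preimage (continuous_const.sub continuous_id)).inter hAc.isClosed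
  have hCcompact : ∀ x, IsCompact (C x) :=
    fun x => hAc.inter_left (hcl.preimage (continuous_const.sub continuous_id))
  have hCself : ∀ x ∈ A, x ∈ C x := fun x hx => ⟨by simpa using h0K, hx⟩
  have hCtrans : ∀ x y, x - y ∈ K → C y ⊆ C x := by
    intro x y hxy z hz
    refine ⟨?_, hz.2⟩
    have := hadd _ hxy _ hz.1
    simpa [sub_add_sub_cancel] using this
  -- key claim: every element of A dominates a minimal element
  have key : ∀ b ∈ A, ∃ z ∈ minSet K A, b - z ∈ K := by
    intro b hb
    set S : Set (Set (EuclideanSpace ℝ (Fin m))) :=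
      {s | ∃ x, x ∈ C b ∧ s = C x} with hS
    have hbS : C b ∈ S := ⟨b, hCself b hb, rfl⟩
    have hlb : ∀ c ⊆ S, IsChain (· ⊆ ·) c → c.Nonempty →
        ∃ lb ∈ S, ∀ s ∈ c, lb ⊆ s := by
      rintro c hcS hchain ⟨s0, hs0⟩
      have hne : ∀ s ∈ c, s.Nonempty := by
        intro s hs
        obtain ⟨x, hx, rfl⟩ := hcS hs
        exact ⟨x, hCself x hx.2⟩
      have : Nonempty c := ⟨⟨s0, hs0⟩⟩
      have hdir : Directed (· ⊇ ·) (fun s : c => (s : Set (EuclideanSpace ℝ (Fin m)))) := by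
        intro i j
        rcases eq_or_ne (i : Set (EuclideanSpace ℝ (Fin m))) (j : Set (EuclideanSpace ℝ (Fin m))) with h | h
        · exact ⟨i, Set.Subset.rfl, h.le⟩
        · rcases hchain i.2 j.2 h with h' | h'
          · exact ⟨i, Set.Subset.rfl, h'⟩
          · exact ⟨j, h', Set.Subset.rfl⟩
      obtain ⟨z, hz⟩ := IsCompact.nonempty_iInter_of_directed_nonempty_isCompact_isClosed
        (fun s : c => (s : Set (EuclideanSpace ℝ (Fin m)))) hdir
        (fun s => hne s s.2)
        (fun s => by obtain ⟨x, -, hx⟩ := hcS s.2; simp only [hx]; exact hCcompact x)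
        (fun s => by obtain ⟨x, -, hx⟩ := hcS s.2; simp only [hx]; exact hCclosed x)
      simp only [Set.mem_iInter] at hz
      have hzs0 : z ∈ s0 := hz ⟨s0, hs0⟩
      obtain ⟨x0, hx0, hx0eq⟩ := hcS hs0
      have hzCb : z ∈ C b := by
        rw [hx0eq] at hzs0
        exact (hCtrans b x0 hx0.1) hzs0
      refine ⟨C z, ⟨z, hzCb, rfl⟩, ?_⟩
      intro s hs
      obtain ⟨x, -, rfl⟩ := hcS hs
      have hzCx : z ∈ C x := hz ⟨C x, hs⟩
      exact hCtrans x z hzCx.1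
    obtain ⟨M, -, hM⟩ := zorn_superset_nonempty S hlb (C b) hbS
    obtain ⟨z, hzCb, rfl⟩ := hM.prop
    have hzA : z ∈ A := hzCb.2
    refine ⟨z, ⟨hzA, ?_⟩, hzCb.1⟩
    rw [hCrepr]
    apply Set.Subset.antisymm
    · intro y hy
      have hyCb : y ∈ C b := (hCtrans b z hzCb.1) hy
      have hsub : C y ⊆ C z := hCtrans z y hy.1
      have := hM.eq_of_subset ⟨y, hyCb, rfl⟩ hsub
      have hzCy : z ∈ C y := by rw [this]; exact hCself z hzA
      -- y - z ∈ K and z - y ∈ K implies z = y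
      have h1 : z - y ∈ K := hy.1
      have h2 : z - y ∈ -K := by simpa [neg_sub] using hzCy.1
      have : z - y ∈ K ∩ (-K) := ⟨h1, h2⟩
      rw [hpointed] at this
      have : z - y = 0 := this
      have : y = z := by
        have := sub_eq_zero.mp this
        exact this.symm
      simp [this]
    · intro y hy
      rw [Set.mem_singleton_iff] at hy
      rw [hy]
      exact hCself z hzA
  -- conclude
  apply Set.Subset.antisymm
  · rintro a ⟨b, hb, k, hk, rfl⟩
    obtain ⟨z, hz, hbz⟩ := key b hb
    refine ⟨z, hz, (b - z) + k, hadd _ hbz _ hk, by abel⟩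
  · rintro a ⟨z, hz, k, hk, rfl⟩
    exact ⟨z, hz.1, k, hk, rfl⟩
end

section
/- Let ψ_e be the Gerstewitz function with Lipschitz constant L, let A₁, …, A_w : ℝ^n → ℝ^m be linear maps with ‖A_j‖ ≤ C for all j, and let B₁, …, B_w be bilinear/quadratic maps with all eigen-bounds at most γ, i.e., ‖uᵀB_j u‖ ≤ γ‖u‖². Suppose ρ > 0 and for all j, uᵀB_j u - ρ‖u‖² e ∈ K for all u. If u* ∈ ℝ^n satisfies ψ_e(A_j u* + (1/2)(u*)ᵀB_j u*) < 0 for all j ∈ [w], then ‖u*‖ ≤ 2CL/ρ. -/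
open Set

section

variable {m : ℕ} {K : Set (EuclideanSpace ℝ (Fin m))} {e z : EuclideanSpace ℝ (Fin m)}

theorem exists_neg_of_psi_neg (hz : psi K e z < 0) : ∃ t : ℝ, t < 0 ∧ t • e - z ∈ K := by
  have hne : {t : ℝ | t • e - z ∈ K}.Nonempty := by
    by_contra h
    rw [not_nonempty_iff_eq_empty] at h
    simp [psi, h] at hz
  obtain ⟨t, ht, hlt⟩ := exists_lt_of_csInf_lt hne hz
  exact ⟨t, hlt, ht⟩

theorem ne_zero_of_psi_neg (hz : psi K e z < 0) : e ≠ 0 := by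
  rintro rfl
  by_cases h : -z ∈ K <;> simp [psi, h] at hz

/-- When the defining set is unbounded below, `psi` takes the junk value `0`. -/
theorem psi_nonpos_of_neg_mem (hz : -z ∈ K) : psi K e z ≤ 0 := by
  have hzero : (0 : ℝ) ∈ {t : ℝ | t • e - z ∈ K} := by simpa using hz
  by_cases hbdd : BddBelow {t : ℝ | t • e - z ∈ K}
  · exact csInf_le hbdd hzero
  · exact (Real.sInf_of_not_bddBelow hbdd).le

theorem smul_mem_iff_nonneg (he : e ∈ K) (hne : -e ∉ K)
    (hsmul : ∀ c : ℝ, 0 ≤ c → ∀ x ∈ K, c • x ∈ K) {c : ℝ} : c • e ∈ K ↔ 0 ≤ c := by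
  refine ⟨fun hc => ?_, fun hc => hsmul c hc e he⟩
  by_contra! hneg
  have := hsmul (-c)⁻¹ (inv_nonneg.mpr (by linarith)) _ hc
  rw [smul_smul, inv_neg, neg_mul, inv_mul_cancel₀ hneg.ne, neg_one_smul] at this
  exact hne this

theorem psi_smul_self (he : e ∈ K) (hne : -e ∉ K)
    (hsmul : ∀ c : ℝ, 0 ≤ c → ∀ x ∈ K, c • x ∈ K) (c : ℝ) : psi K e (c • e) = c := by
  have hset : {t : ℝ | t • e - c • e ∈ K} = Ici c := by
    ext t
    rw [mem_ofPred_eq, ← sub_smul, smul_mem_iff_nonneg he hne hsmul, mem_Ici, sub_nonneg]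
  rw [psi, hset, csInf_Ici]

theorem lt_mul_norm_of_psi_add_neg (he : e ∈ K) (hpointed : K ∩ -K = {0})
    (hadd : ∀ x ∈ K, ∀ y ∈ K, x + y ∈ K) (hsmul : ∀ c : ℝ, 0 ≤ c → ∀ x ∈ K, c • x ∈ K)
    {L : ℝ} (hLip : ∀ y z : EuclideanSpace ℝ (Fin m), |psi K e y - psi K e z| ≤ L * ‖y - z‖)
    {y q : EuclideanSpace ℝ (Fin m)} {r : ℝ} (hq : q - r • e ∈ K)
    (hneg : psi K e (y + q) < 0) : r < L * ‖y‖ := by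
  have hne : -e ∉ K := fun h => ne_zero_of_psi_neg hneg <| by
    simpa using (hpointed.subset ⟨he, by simpa using h⟩ : e ∈ ({0} : Set _))
  obtain ⟨t, ht, hmem⟩ := exists_neg_of_psi_neg hneg
  have hshift : -(y + (r - t) • e) ∈ K := by
    convert hadd _ hmem _ hq using 1
    rw [sub_smul]
    abel
  have hlip := hLip (y + (r - t) • e) ((r - t) • e)
  rw [psi_smul_self he hne hsmul, add_sub_cancel_right] at hlip
  linarith [psi_nonpos_of_neg_mem (e := e) hshift, (abs_le.mp hlip).1]

end

theorem newton_direction_bounded_general {n m w : ℕ} (hw : 0 < w)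
    (K : Set (EuclideanSpace ℝ (Fin m)))
    (e : EuclideanSpace ℝ (Fin m))
    (hadd : ∀ x ∈ K, ∀ y ∈ K, x + y ∈ K)
    (hsmul : ∀ (c : ℝ), 0 ≤ c → ∀ x ∈ K, c • x ∈ K)
    (hpointed : K ∩ (-K) = {0})
    (he : e ∈ interior K)
    (L : ℝ)
    (hLip : ∀ y z : EuclideanSpace ℝ (Fin m), |psi K e y - psi K e z| ≤ L * ‖y - z‖)
    (A : Fin w → (EuclideanSpace ℝ (Fin n) →L[ℝ] EuclideanSpace ℝ (Fin m)))
    (C : ℝ) (hC : ∀ j, ‖A j‖ ≤ C)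
    (B : Fin w → EuclideanSpace ℝ (Fin n) → EuclideanSpace ℝ (Fin m))
    (ρ : ℝ) (hρ : 0 < ρ)
    (hstrong : ∀ j u, B j u - (ρ * ‖u‖ ^ 2) • e ∈ K)
    (ustar : EuclideanSpace ℝ (Fin n))
    (hneg : ∀ j : Fin w, psi K e (A j ustar + (1 / 2 : ℝ) • B j ustar) < 0) :
    ‖ustar‖ ≤ 2 * C * L / ρ := by
  let j : Fin w := ⟨0, hw⟩
  have hq : (1 / 2 : ℝ) • B j ustar - (ρ * ‖ustar‖ ^ 2 / 2) • e ∈ K := by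
    convert hsmul (1 / 2) (by norm_num) _ (hstrong j ustar) using 1
    rw [smul_sub, smul_smul]
    ring_nf
  have hquad : ρ * ‖ustar‖ ^ 2 / 2 < L * ‖A j ustar‖ :=
    lt_mul_norm_of_psi_add_neg (interior_subset he) hpointed hadd hsmul hLip hq (hneg j)
  have hL : 0 < L := pos_of_mul_pos_left ((by positivity : (0 : ℝ) ≤ _).trans_lt hquad)
    (norm_nonneg _)
  have hlin : ρ * ‖ustar‖ ^ 2 / 2 < L * C * ‖ustar‖ := by
    calc ρ * ‖ustar‖ ^ 2 / 2 < L * ‖A j ustar‖ := hquad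
      _ ≤ L * (C * ‖ustar‖) := by
        gcongr
        exact (A j).le_of_opNorm_le (hC j) ustar
      _ = L * C * ‖ustar‖ := by ring
  have hpos : 0 < ‖ustar‖ := by
    by_contra! h
    simp [le_antisymm h (norm_nonneg _)] at hlin
  rw [le_div_iff₀ hρ]
  nlinarith

theorem newton_direction_bounded {n m w : ℕ} (hw : 0 < w)
    (K : Set (EuclideanSpace ℝ (Fin m)))
    (e : EuclideanSpace ℝ (Fin m))
    (hcl : IsClosed K) (hconv : Convex ℝ K)
    (hadd : ∀ x ∈ K, ∀ y ∈ K, x + y ∈ K)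
    (hsmul : ∀ (c : ℝ), 0 ≤ c → ∀ x ∈ K, c • x ∈ K)
    (hpointed : K ∩ (-K) = {0})
    (he : e ∈ interior K)
    (L : ℝ) (hL : 0 < L)
    (hLip : ∀ y z : EuclideanSpace ℝ (Fin m), |psi K e y - psi K e z| ≤ L * ‖y - z‖)
    (A : Fin w → (EuclideanSpace ℝ (Fin n) →L[ℝ] EuclideanSpace ℝ (Fin m)))
    (C : ℝ) (hC : ∀ j, ‖A j‖ ≤ C)
    (B : Fin w → EuclideanSpace ℝ (Fin n) → EuclideanSpace ℝ (Fin m))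
    (γ : ℝ) (hγ : ∀ j u, ‖B j u‖ ≤ γ * ‖u‖ ^ 2)
    (ρ : ℝ) (hρ : 0 < ρ)
    (hstrong : ∀ j u, B j u - (ρ * ‖u‖ ^ 2) • e ∈ K)
    (ustar : EuclideanSpace ℝ (Fin n))
    (hneg : ∀ j : Fin w, psi K e (A j ustar + (1 / 2 : ℝ) • B j ustar) < 0) :
    ‖ustar‖ ≤ 2 * C * L / ρ :=
  newton_direction_bounded_general hw K e hadd hsmul hpointed he L hLip A C hC B ρ hρ hstrong ustar
    hneg
end

section
/- Let F(x) = {f¹(x), …, f^p(x)} with each f^i : ℝ^n → ℝ^m continuous, and suppose for indices a₁,…,a_w enumerating Min(F(x̄), K) and all t ∈ (0, t̄] and j ∈ [w] one has f^{a_j}(x̄ + tū) ⪯ f^{a_j}(x̄) + βt∇f^{a_j}(x̄)ᵀū with ∇f^{a_j}(x̄)ᵀū ∈ -int(K). Then F(x̄ + tū) ≺^l F(x̄) for all t ∈ (0, t̄], that is, F(x̄) ⊆ F(x̄ + tū) + int(K). -/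
open Set Pointwise

private lemma exists_minimal_below {m : ℕ} (K : Set (EuclideanSpace ℝ (Fin m)))
    (hadd : ∀ x ∈ K, ∀ y ∈ K, x + y ∈ K)
    (h0K : (0 : EuclideanSpace ℝ (Fin m)) ∈ K)
    (hpointed : K ∩ (-K) = {0}) :
    ∀ S : Finset (EuclideanSpace ℝ (Fin m)), ∀ y ∈ S,
      ∃ z ∈ S, y - z ∈ K ∧ ∀ z' ∈ S, z - z' ∈ K → z' = z := by
  classical
  intro S
  induction S using Finset.strongInductionOn with
  | _ S ih =>
    intro y hy
    by_cases h : ∀ z' ∈ S, y - z' ∈ K → z' = y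
    · exact ⟨y, hy, by simpa using h0K, h⟩
    · push_neg at h
      obtain ⟨z', hz', hk, hne⟩ := h
      obtain ⟨z, hzS, hzk, hmin⟩ := ih (S.erase y) (Finset.erase_ssubset hy) z'
        (Finset.mem_erase.2 ⟨hne, hz'⟩)
      refine ⟨z, Finset.mem_of_mem_erase hzS, ?_, ?_⟩
      · have := hadd _ hk _ hzk
        simpa using this
      · intro w hw hwk
        by_cases hwy : w = y
        · exfalso
          subst hwy
          have h1 : z - w ∈ K := hwk
          have h2 : w - z ∈ K := by
            have := hadd _ hk _ hzk
            simpa using this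
          have : z - w ∈ K ∩ (-K) := ⟨h1, by simpa using h2⟩
          rw [hpointed] at this
          have : z = w := by
            have := Set.mem_singleton_iff.1 this
            linear_combination (norm := module) this
          exact Finset.notMem_erase w S (this ▸ hzS)
        · exact hmin w (Finset.mem_erase.2 ⟨hwy, hw⟩) hwk

private lemma smul_mem_interior {m : ℕ} (K : Set (EuclideanSpace ℝ (Fin m)))
    (hsmul : ∀ (c : ℝ), 0 ≤ c → ∀ x ∈ K, c • x ∈ K)
    {c : ℝ} (hc : 0 < c) {x : EuclideanSpace ℝ (Fin m)} (hx : x ∈ interior K) :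
    c • x ∈ interior K := by
  have ho : IsOpen (c • interior K) := (isOpenMap_smul₀ hc.ne') _ isOpen_interior
  have hsub : c • interior K ⊆ K := by
    rintro _ ⟨y, hy, rfl⟩
    exact hsmul c hc.le y (interior_subset hy)
  exact interior_maximal hsub ho (smul_mem_smul_set hx)

private lemma add_mem_interior {m : ℕ} (K : Set (EuclideanSpace ℝ (Fin m)))
    (hadd : ∀ x ∈ K, ∀ y ∈ K, x + y ∈ K)
    {x y : EuclideanSpace ℝ (Fin m)} (hx : x ∈ K) (hy : y ∈ interior K) :
    x + y ∈ interior K := by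
  have ho : IsOpen ((x + ·) '' interior K) := (isOpenMap_add_left x) _ isOpen_interior
  have hsub : ((x + ·) '' interior K) ⊆ K := by
    rintro _ ⟨z, hz, rfl⟩
    exact hadd x hx z (interior_subset hz)
  exact interior_maximal hsub ho ⟨y, hy, rfl⟩

theorem set_decrease_along_armijo {n m p w : ℕ} (K : Set (EuclideanSpace ℝ (Fin m)))
    (hcl : IsClosed K) (hconv : Convex ℝ K)
    (hadd : ∀ x ∈ K, ∀ y ∈ K, x + y ∈ K)
    (hsmul : ∀ (c : ℝ), 0 ≤ c → ∀ x ∈ K, c • x ∈ K)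
    (hpointed : K ∩ (-K) = {0})
    (hsolid : (interior K).Nonempty)
    (f : Fin p → EuclideanSpace ℝ (Fin n) → EuclideanSpace ℝ (Fin m))
    (hf : ∀ i, Continuous (f i))
    (β : ℝ) (hβ : β ∈ Set.Ioo (0:ℝ) 1)
    (xbar ubar : EuclideanSpace ℝ (Fin n))
    (tbar : ℝ) (htbar : 0 < tbar)
    (a : Fin w → Fin p)
    (henum : (Set.range fun j => f (a j) xbar) = minSet K (Set.range fun i => f i xbar))
    (hdesc : ∀ j : Fin w, fderiv ℝ (f (a j)) xbar ubar ∈ -(interior K))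
    (harmijo : ∀ t ∈ Set.Ioc (0:ℝ) tbar, ∀ j : Fin w,
        (f (a j) xbar + (β * t) • fderiv ℝ (f (a j)) xbar ubar) - f (a j) (xbar + t • ubar) ∈ K) :
    ∀ t ∈ Set.Ioc (0:ℝ) tbar,
      (Set.range fun i => f i xbar) ⊆
        (Set.range fun i => f i (xbar + t • ubar)) + interior K := by
  classical
  have h0K : (0 : EuclideanSpace ℝ (Fin m)) ∈ K := by
    have h0 : (0 : EuclideanSpace ℝ (Fin m)) ∈ ({0} : Set (EuclideanSpace ℝ (Fin m))) := rfl
    rw [← hpointed] at h0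
    exact h0.1
  intro t ht y hy
  obtain ⟨i, rfl⟩ := hy
  -- the finite set of values
  set S : Finset (EuclideanSpace ℝ (Fin m)) :=
    Finset.image (fun i => f i xbar) Finset.univ with hS
  have hyS : f i xbar ∈ S := Finset.mem_image.2 ⟨i, Finset.mem_univ i, rfl⟩
  obtain ⟨z, hzS, hzk, hmin⟩ := exists_minimal_below K hadd h0K hpointed S _ hyS
  -- z is in the minSet
  have hzrange : z ∈ Set.range fun i => f i xbar := by
    obtain ⟨i', _, hi'⟩ := Finset.mem_image.1 hzS
    exact ⟨i', hi'⟩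
  have hzmin : z ∈ minSet K (Set.range fun i => f i xbar) := by
    refine ⟨hzrange, ?_⟩
    ext u
    constructor
    · rintro ⟨hu1, hu2⟩
      obtain ⟨zz, hzz, k, hk, hzk'⟩ := Set.mem_sub.1 hu1
      rw [Set.mem_singleton_iff] at hzz
      rw [hzz] at hzk'
      have hzu : z - u ∈ K := by
        have h' : z - u = k := by linear_combination (norm := module) hzk'
        rwa [h']
      have huS : u ∈ S := by
        obtain ⟨i', hi'⟩ := hu2
        exact Finset.mem_image.2 ⟨i', Finset.mem_univ i', hi'⟩
      exact hmin u huS hzu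
    · intro hu
      rw [Set.mem_singleton_iff.1 hu]
      exact ⟨⟨z, rfl, 0, h0K, sub_zero z⟩, hzrange⟩
  rw [← henum] at hzmin
  obtain ⟨j, hj⟩ := hzmin
  -- pieces
  set d := fderiv ℝ (f (a j)) xbar ubar with hd
  have hdint : -d ∈ interior K := Set.mem_neg.1 (hdesc j)
  have hβt : 0 < β * t := mul_pos hβ.1 ht.1
  have hu0 : (β * t) • (-d) ∈ interior K := smul_mem_interior K hsmul hβt hdint
  have hk2 : (f (a j) xbar + (β * t) • d) - f (a j) (xbar + t • ubar) ∈ K := harmijo t ht j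
  have hk1 : f i xbar - z ∈ K := hzk
  have hkk : (f i xbar - z) + ((f (a j) xbar + (β * t) • d) - f (a j) (xbar + t • ubar)) ∈ K :=
    hadd _ hk1 _ hk2
  have hfin : (f i xbar - z) + ((f (a j) xbar + (β * t) • d) - f (a j) (xbar + t • ubar))
      + (β * t) • (-d) ∈ interior K := add_mem_interior K hadd hkk hu0
  refine ⟨f (a j) (xbar + t • ubar), ⟨a j, rfl⟩,
    (f i xbar - z) + ((f (a j) xbar + (β * t) • d) - f (a j) (xbar + t • ubar))
      + (β * t) • (-d), hfin, ?_⟩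
  have hzj : f (a j) xbar = z := hj
  rw [hzj]
  module
end
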